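/- arXiv:1511.08009 — 2 statements merged into one kernel-verified Lean document; each statement's English description precedes it below -/
import Mathlib

section
/- Let C be a planar convex body that is k-rotationally symmetric about a point p in its interior, for an integer k ≥ 6. Then d_M(P_k) = R, i.e. diam(C ∩ S_k) = R. In particular, if C is multi-rotationally symmetric with minimal degree χ_C ≥ 6, then d_M(P_{χ_C}) = R. -/
open Metric Set

/-- Rotation of angle `α` about the point `p` in the plane `ℂ`. -/
noncomputable def rot (p : ℂ) (α : ℝ) : ℂ → ℂ :=
  fun z => p + Complex.exp (α * Complex.I) * (z - p)

/-- A planar convex body: a compact convex subset of the plane with nonempty interior. -/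
def IsConvexBody (C : Set ℂ) : Prop :=
  IsCompact C ∧ Convex ℝ C ∧ (interior C).Nonempty

/-- `C` is `k`-rotationally symmetric about `p`: the rotation of angle `2π/k`
about `p` maps `C` onto itself. -/
def IsRotSym (C : Set ℂ) (p : ℂ) (k : ℕ) : Prop :=
  rot p (2 * Real.pi / k) '' C = C

/-- The closed convex sector at `p` spanned by `x - p` and `ρ_k(x) - p`. -/
noncomputable def sector (p x : ℂ) (k : ℕ) : Set ℂ :=
  {z | ∃ a b : ℝ, 0 ≤ a ∧ 0 ≤ b ∧
    z = p + (a : ℂ) * (x - p) + (b : ℂ) * (rot p (2 * Real.pi / k) x - p)}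

/-- The maximum relative diameter of the standard `k`-partition of `C`
(with center `p` and endpoint `x`): the diameter of one piece `C ∩ S_k`. -/
noncomputable def dM (C : Set ℂ) (p x : ℂ) (k : ℕ) : ℝ :=
  Metric.diam (C ∩ sector p x k)

/-- The circumradius of `C` with respect to `p`: `sup_{y ∈ C} dist p y`. -/
noncomputable def circumrad (C : Set ℂ) (p : ℂ) : ℝ :=
  ⨆ y ∈ C, dist p y

/-!
The piece `C ∩ S_k` lies in a sector at `p` of opening angle `2π/k ≤ π/3`. For `u, v` in such
a sector the angle of the triangle `p u v` at `p` is at most `π/3`, so it is not the largest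
angle, and `|u - v| ≤ max (|u - p|) (|v - p|) ≤ R`. Conversely, the rotations of a farthest
point `y₀` of `C` by multiples of `2π/k` reach every direction up to an error `< 2π/k`, so one of
them lies in `S_k`; it is at distance `R` from `p ∈ C ∩ S_k`.
-/

open Complex ComplexConjugate
open scoped Real

theorem norm_sub_le_max_of_norm_mul_norm_le_two_mul_inner {E : Type*} [NormedAddCommGroup E]
    [InnerProductSpace ℝ E] {u v : E} (h : ‖u‖ * ‖v‖ ≤ 2 * inner ℝ u v) :
    ‖u - v‖ ≤ max ‖u‖ ‖v‖ := by
  refine (pow_le_pow_iff_left₀ (norm_nonneg _) (le_max_of_le_left (norm_nonneg _))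
    two_ne_zero).mp ?_
  rw [norm_sub_sq_real]
  rcases le_total ‖u‖ ‖v‖ with huv | huv
  · rw [max_eq_right huv]; nlinarith [norm_nonneg u]
  · rw [max_eq_left huv]; nlinarith [norm_nonneg v]

-- The hypotheses say `|arg z| ≤ π/3`.
theorem Complex.norm_le_two_mul_re_of_sq_im_le {z : ℂ} (hre : 0 ≤ z.re)
    (him : z.im ^ 2 ≤ 3 * z.re ^ 2) : ‖z‖ ≤ 2 * z.re := by
  refine (pow_le_pow_iff_left₀ (norm_nonneg _) (by positivity) two_ne_zero).mp ?_
  rw [Complex.sq_norm, Complex.normSq_apply]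
  nlinarith

def sectorCone (e : ℂ) : Set ℂ := {w | ∃ a b : ℝ, 0 ≤ a ∧ 0 ≤ b ∧ w = a + b * e}

theorem norm_mul_norm_le_two_mul_inner_of_mem_sectorCone {e w₁ w₂ : ℂ} (hre : 0 ≤ e.re)
    (him : e.im ^ 2 ≤ 3 * e.re ^ 2) (hw₁ : w₁ ∈ sectorCone e) (hw₂ : w₂ ∈ sectorCone e) :
    ‖w₁‖ * ‖w₂‖ ≤ 2 * inner ℝ w₁ w₂ := by
  obtain ⟨a₁, b₁, ha₁, hb₁, rfl⟩ := hw₁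
  obtain ⟨a₂, b₂, ha₂, hb₂, rfl⟩ := hw₂
  -- `‖w₁‖ * ‖w₂‖ = ‖z‖` and `⟪w₁, w₂⟫ = re z`, where `arg z` is the angle from `w₁` to `w₂`
  set z := (a₂ + b₂ * e) * conj (a₁ + b₁ * e : ℂ)
  have hz_re : z.re = a₁ * a₂ + b₁ * b₂ * normSq e + (a₁ * b₂ + a₂ * b₁) * e.re := by
    simp only [z, map_add, map_mul, conj_ofReal, mul_re, mul_im, add_re, add_im, ofReal_re,
      ofReal_im, conj_re, conj_im, normSq_apply]
    ring
  have hz_im : z.im = (a₁ * b₂ - a₂ * b₁) * e.im := by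
    simp only [z, map_add, map_mul, conj_ofReal, mul_re, mul_im, add_re, add_im, ofReal_re,
      ofReal_im, conj_re, conj_im]
    ring
  have hcross_re : 0 ≤ (a₁ * b₂ + a₂ * b₁) * e.re := mul_nonneg (by positivity) hre
  have hle : (a₁ * b₂ + a₂ * b₁) * e.re ≤ z.re := by
    rw [hz_re]
    nlinarith [mul_nonneg ha₁ ha₂, mul_nonneg (mul_nonneg hb₁ hb₂) (normSq_nonneg e)]
  have hz_re_nonneg : 0 ≤ z.re := hcross_re.trans hle
  have hz_im_sq : z.im ^ 2 ≤ 3 * z.re ^ 2 := by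
    have hcross : (a₁ * b₂ - a₂ * b₁) ^ 2 ≤ (a₁ * b₂ + a₂ * b₁) ^ 2 := by
      nlinarith [mul_nonneg (mul_nonneg ha₁ hb₂) (mul_nonneg ha₂ hb₁)]
    calc z.im ^ 2 = (a₁ * b₂ - a₂ * b₁) ^ 2 * e.im ^ 2 := by rw [hz_im]; ring
      _ ≤ (a₁ * b₂ + a₂ * b₁) ^ 2 * (3 * e.re ^ 2) :=
        mul_le_mul hcross him (sq_nonneg _) (sq_nonneg _)
      _ = 3 * ((a₁ * b₂ + a₂ * b₁) * e.re) ^ 2 := by ring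
      _ ≤ 3 * z.re ^ 2 := by gcongr
  rw [Complex.inner, ← norm_conj (a₁ + b₁ * e : ℂ), mul_comm, ← norm_mul]
  exact norm_le_two_mul_re_of_sq_im_le hz_re_nonneg hz_im_sq

theorem ofReal_mul_exp_mem_sectorCone {r α β : ℝ} (hr : 0 ≤ r) (hβ : 0 ≤ β) (hβα : β ≤ α)
    (hα : 0 < α) (hαπ : α < π) : (r * exp (β * I) : ℂ) ∈ sectorCone (exp (α * I)) := by
  have hsin : 0 < Real.sin α := Real.sin_pos_of_pos_of_lt_pi hα hαπ
  -- the sine rule in the triangle with vertices `0`, `a` and `a + b e^{iα} = r e^{iβ}`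
  refine ⟨r * Real.sin (α - β) / Real.sin α, r * Real.sin β / Real.sin α,
    div_nonneg (mul_nonneg hr (Real.sin_nonneg_of_nonneg_of_le_pi (by linarith) (by linarith)))
      hsin.le,
    div_nonneg (mul_nonneg hr (Real.sin_nonneg_of_nonneg_of_le_pi hβ (by linarith))) hsin.le, ?_⟩
  apply Complex.ext
  · simp only [mul_re, add_re, ofReal_re, ofReal_im, exp_ofReal_mul_I_re,
      exp_ofReal_mul_I_im, Real.sin_sub]
    field_simp
    ring
  · simp only [mul_im, add_im, ofReal_re, ofReal_im, exp_ofReal_mul_I_re, exp_ofReal_mul_I_im]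
    field_simp
    ring

theorem exists_nat_exp_mul_mem_sectorCone {α : ℝ} (hα : 0 < α) (hαπ : α < π) (w : ℂ) :
    ∃ j : ℕ, exp (↑(j * α) * I) * w ∈ sectorCone (exp (α * I)) := by
  set t := 2 * π - arg w
  have ht : 0 ≤ t := by linarith [arg_le_pi w, Real.pi_pos]
  -- `j` is least with `j * α ≥ t`, so the rotated argument `j * α + arg w - 2π` is in `[0, α)`
  set j := ⌈t / α⌉₊
  refine ⟨j, ?_⟩
  have hle : t ≤ j * α := (div_le_iff₀ hα).mp (Nat.le_ceil _)
  have hlt : j * α < t + α := by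
    calc j * α < (t / α + 1) * α :=
          mul_lt_mul_of_pos_right (Nat.ceil_lt_add_one (div_nonneg ht hα.le)) hα
      _ = t + α := by field_simp
  have hrot : exp (↑(j * α) * I) * w = ‖w‖ * exp (↑(j * α - t) * I) := by
    conv_lhs => rw [← norm_mul_exp_arg_mul_I w]
    have : (↑(j * α) * I + arg w * I : ℂ) = ↑(j * α - t) * I + 2 * π * I := by
      simp only [t]; push_cast; ring
    rw [mul_left_comm, ← exp_add, this, exp_add, exp_two_pi_mul_I, mul_one]
  rw [hrot]
  exact ofReal_mul_exp_mem_sectorCone (norm_nonneg w) (by linarith) (by linarith) hα hαπ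

theorem rot_sub (p : ℂ) (α : ℝ) (z : ℂ) : rot p α z - p = exp (α * I) * (z - p) := by
  simp [rot]

theorem rot_rot (p : ℂ) (α β : ℝ) (z : ℂ) : rot p β (rot p α z) = rot p (α + β) z := by
  simp only [rot, add_sub_cancel_left, ofReal_add, add_mul, exp_add]
  ring

theorem iterate_rot (p : ℂ) (α : ℝ) (j : ℕ) (z : ℂ) : (rot p α)^[j] z = rot p (j * α) z := by
  induction j with
  | zero => simp [rot]
  | succ j ih => rw [Function.iterate_succ_apply', ih, rot_rot]; push_cast; ring_nf

theorem dist_rot (p : ℂ) (α : ℝ) (z : ℂ) : dist p (rot p α z) = dist p z := by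
  rw [dist_comm, dist_eq, rot_sub, norm_mul, norm_exp_ofReal_mul_I, one_mul, ← dist_eq,
    dist_comm]

theorem IsRotSym.iterate_mem {C : Set ℂ} {p : ℂ} {k : ℕ} (hsym : IsRotSym C p k) {z : ℂ}
    (hz : z ∈ C) (j : ℕ) : (rot p (2 * π / k))^[j] z ∈ C :=
  (mapsTo_iff_image_subset.mpr hsym.subset).iterate j hz

theorem mem_sector_iff {p x z : ℂ} {k : ℕ} :
    z ∈ sector p x k ↔ ∃ w ∈ sectorCone (exp (↑(2 * π / k) * I)), z - p = w * (x - p) := by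
  constructor
  · rintro ⟨a, b, ha, hb, rfl⟩
    exact ⟨a + b * exp (↑(2 * π / k) * I), ⟨a, b, ha, hb, rfl⟩, by rw [rot_sub]; ring⟩
  · rintro ⟨_, ⟨a, b, ha, hb, rfl⟩, hz⟩
    exact ⟨a, b, ha, hb, by rw [rot_sub]; linear_combination hz⟩

theorem self_mem_sector (p x : ℂ) (k : ℕ) : p ∈ sector p x k :=
  ⟨0, 0, le_rfl, le_rfl, by simp⟩

theorem dist_le_max_of_mem_sector {p x u v : ℂ} {k : ℕ} (hk : 6 ≤ k) (hu : u ∈ sector p x k)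
    (hv : v ∈ sector p x k) : dist u v ≤ max (dist p u) (dist p v) := by
  obtain ⟨w₁, hw₁, hu⟩ := mem_sector_iff.mp hu
  obtain ⟨w₂, hw₂, hv⟩ := mem_sector_iff.mp hv
  set α := 2 * π / k
  have hk' : (6 : ℝ) ≤ k := by exact_mod_cast hk
  have hα : 0 ≤ α := by positivity
  have hαπ : α ≤ π / 3 := by
    rw [div_le_div_iff₀ (by linarith) (by norm_num)]; nlinarith [Real.pi_pos]
  have hcos : 1 / 2 ≤ Real.cos α := by
    rw [← Real.cos_pi_div_three]
    exact Real.cos_le_cos_of_nonneg_of_le_pi hα (by linarith [Real.pi_pos]) hαπ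
  have hcone : ‖w₁ - w₂‖ ≤ max ‖w₁‖ ‖w₂‖ := by
    refine norm_sub_le_max_of_norm_mul_norm_le_two_mul_inner
      (norm_mul_norm_le_two_mul_inner_of_mem_sectorCone ?_ ?_ hw₁ hw₂)
    · rw [exp_ofReal_mul_I_re]; linarith
    · rw [exp_ofReal_mul_I_re, exp_ofReal_mul_I_im]; nlinarith [Real.sin_sq_add_cos_sq α]
  have huv : u - v = (w₁ - w₂) * (x - p) := by linear_combination hu - hv
  rw [dist_comm p u, dist_comm p v, dist_eq, dist_eq, dist_eq, huv, hu, hv, norm_mul,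
    norm_mul, norm_mul, ← max_mul_of_nonneg _ _ (norm_nonneg _)]
  exact mul_le_mul_of_nonneg_right hcone (norm_nonneg _)

theorem exists_iterate_rot_mem_sector {p x : ℂ} {k : ℕ} (hk : 3 ≤ k) (hx : x ≠ p) (y : ℂ) :
    ∃ j : ℕ, (rot p (2 * π / k))^[j] y ∈ sector p x k := by
  have hk' : (3 : ℝ) ≤ k := by exact_mod_cast hk
  have hα : 0 < 2 * π / k := by positivity
  have hαπ : 2 * π / k < π := by
    rw [div_lt_iff₀ (by linarith)]; nlinarith [Real.pi_pos]
  obtain ⟨j, hj⟩ := exists_nat_exp_mul_mem_sectorCone hα hαπ ((y - p) / (x - p))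
  refine ⟨j, mem_sector_iff.mpr ⟨_, hj, ?_⟩⟩
  rw [iterate_rot, rot_sub, mul_assoc, div_mul_cancel₀ _ (sub_ne_zero.mpr hx)]

theorem circumrad_eq_dist_of_isMaxOn {C : Set ℂ} {p y₀ : ℂ} (hy₀ : y₀ ∈ C)
    (hmax : IsMaxOn (dist p) C y₀) : circumrad C p = dist p y₀ := by
  have hle : ∀ y, ⨆ _ : y ∈ C, dist p y ≤ dist p y₀ :=
    fun y => Real.iSup_le (fun hy => hmax hy) dist_nonneg
  refine le_antisymm (Real.iSup_le hle dist_nonneg) ?_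
  calc dist p y₀ = ⨆ _ : y₀ ∈ C, dist p y₀ := (ciSup_const (hι := ⟨hy₀⟩)).symm
    _ ≤ circumrad C p := le_ciSup ⟨dist p y₀, by rintro _ ⟨y, rfl⟩; exact hle y⟩ y₀

theorem stmt_6_general (C : Set ℂ) (p x : ℂ) (k : ℕ) (hC : IsConvexBody C)
    (hk : 6 ≤ k) (hsym : IsRotSym C p k) (hp : p ∈ interior C)
    (hx : x ∈ frontier C) :
    dM C p x k = circumrad C p := by
  obtain ⟨hCc, -, -⟩ := hC
  have hpC : p ∈ C := interior_subset hp
  have hxp : x ≠ p := fun h => hx.2 (h ▸ hp)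
  obtain ⟨y₀, hy₀C, hy₀⟩ :=
    hCc.exists_isMaxOn ⟨p, hpC⟩ (continuous_const.dist continuous_id).continuousOn
  rw [dM, circumrad_eq_dist_of_isMaxOn hy₀C hy₀]
  refine le_antisymm (diam_le_of_forall_dist_le dist_nonneg ?_) ?_
  · rintro u ⟨huC, hu⟩ v ⟨hvC, hv⟩
    exact (dist_le_max_of_mem_sector hk hu hv).trans (max_le (hy₀ huC) (hy₀ hvC))
  · obtain ⟨j, hj⟩ := exists_iterate_rot_mem_sector (k := k) (by omega) hxp y₀
    calc dist p y₀ = dist p ((rot p (2 * π / k))^[j] y₀) := by rw [iterate_rot, dist_rot]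
      _ ≤ diam (C ∩ sector p x k) :=
        dist_le_diam_of_mem (hCc.isBounded.subset inter_subset_left)
          ⟨hpC, self_mem_sector p x k⟩ ⟨hsym.iterate_mem hy₀C j, hj⟩

/-- For a `k`-rotationally symmetric planar convex body with `k ≥ 6`,
the maximum relative diameter of the standard `k`-partition equals the
circumradius `R`. -/
theorem stmt_6 (C : Set ℂ) (p x : ℂ) (k : ℕ) (hC : IsConvexBody C)
    (hk : 6 ≤ k) (hsym : IsRotSym C p k) (hp : p ∈ interior C)
    (hx : x ∈ frontier C) (hxr : dist p x = infDist p (frontier C)) :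
    dM C p x k = circumrad C p :=
  stmt_6_general C p x k hC hk hsym hp hx
end

section
/- Let C be a planar convex body that is k-rotationally symmetric about a point p in its interior, for an integer k ≥ 4. Then R < √3 · r, where r = dist(p, ∂C) and R = sup_{y ∈ C} dist(p, y). -/
open Metric Set

open Real ComplexConjugate
open scoped RealInnerProductSpace

/-!
Given `y ∈ C` and a point `q ∈ ∂C`, take a supporting functional `⟪w, ·⟫` of `C` at `q`.
Some rotation `ρ` of angle a multiple of `2π/k` about `p` turns `y - p` to within angle `π/k`
of `w`, so `cos (π/k) ‖w‖ ‖y - p‖ ≤ ⟪w, ρ y - p⟫ ≤ ⟪w, q - p⟫ ≤ ‖w‖ ‖q - p‖`.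
Hence `cos (π/k) R ≤ r`, and `cos (π/k) ≥ cos (π/4) = 1/√2 > 1/√3` when `k ≥ 4`.
-/

lemma rot_add (p : ℂ) (α β : ℝ) : rot p (α + β) = rot p α ∘ rot p β := by
  ext z
  simp only [rot, Function.comp_apply, Complex.ofReal_add, add_mul, Complex.exp_add]
  ring

lemma rot_nat_mul (p : ℂ) (α : ℝ) (n : ℕ) : rot p (n * α) = (rot p α)^[n] := by
  induction n with
  | zero => ext z; simp [rot]
  | succ n ih => rw [Function.iterate_succ', ← ih, ← rot_add]; push_cast; ring_nf

lemma rot_sub_center (p z : ℂ) (α : ℝ) : rot p α z - p = Complex.exp (α * Complex.I) * (z - p) :=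
  add_sub_cancel_left _ _

lemma exists_nat_cos_pi_div_le_cos {k : ℕ} (hk : 0 < k) (β : ℝ) :
    ∃ j : ℕ, cos (π / k) ≤ cos (β + j * (2 * π / k)) := by
  set θ := 2 * π / k
  have hθ : 0 < θ := by positivity
  -- `m * θ` is the multiple of `θ` nearest to `-β`; reducing `m` mod `k` shifts the angle by
  -- a multiple of `2π`.
  set m := round (-β / θ)
  have hm : |β + m * θ| ≤ π / k :=
    calc |β + m * θ| = θ * |-β / θ - m| := by
          rw [← abs_of_pos hθ, ← abs_mul, abs_of_pos hθ, ← abs_neg]; congr 1; field_simp; ring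
      _ ≤ θ * (1 / 2) := by gcongr; exact abs_sub_round _
      _ = π / k := by ring
  refine ⟨(m % k).toNat, ?_⟩
  have hj : ((m % k).toNat : ℝ) * θ = m * θ - (m / k : ℤ) * (2 * π) := by
    have h : (((m % k).toNat : ℤ) : ℝ) = ((m - k * (m / k) : ℤ) : ℝ) := by
      rw [Int.toNat_of_nonneg (Int.emod_nonneg m (by positivity)), Int.emod_def]
    push_cast at h
    rw [h]; simp only [θ]; field_simp
  rw [hj, ← add_sub_assoc, Real.cos_sub_int_mul_two_pi, ← Real.cos_abs (β + m * θ)]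
  exact cos_le_cos_of_nonneg_of_le_pi (abs_nonneg _)
    (div_le_self pi_pos.le (Nat.one_le_cast.2 hk)) hm

lemma exists_nat_cos_pi_div_mul_norm_le_re {k : ℕ} (hk : 0 < k) (ζ : ℂ) :
    ∃ j : ℕ, cos (π / k) * ‖ζ‖ ≤ (Complex.exp ((j * (2 * π / k) : ℝ) * Complex.I) * ζ).re := by
  obtain ⟨j, hj⟩ := exists_nat_cos_pi_div_le_cos hk ζ.arg
  refine ⟨j, ?_⟩
  have hre : (Complex.exp ((j * (2 * π / k) : ℝ) * Complex.I) * ζ).re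
      = ‖ζ‖ * cos (ζ.arg + j * (2 * π / k)) := by
    conv_lhs => rw [← Complex.norm_mul_exp_arg_mul_I ζ]
    rw [mul_left_comm, ← Complex.exp_add, ← add_mul, ← Complex.ofReal_add, add_comm,
      Complex.re_ofReal_mul, Complex.exp_ofReal_mul_I_re]
  rw [hre, mul_comm]
  exact mul_le_mul_of_nonneg_left hj (norm_nonneg ζ)

lemma cos_pi_div_mul_dist_le_of_notMem_interior {C : Set ℂ} {p y q : ℂ} {k : ℕ} (hk : 0 < k)
    (hconv : Convex ℝ C) (hint : (interior C).Nonempty)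
    (hsym : MapsTo (rot p (2 * π / k)) C C) (hy : y ∈ C) (hq : q ∉ interior C) :
    cos (π / k) * dist p y ≤ dist p q := by
  obtain ⟨f, hf0, hfq⟩ := geometric_hahn_banach_of_nonempty_interior_point hconv hq hint
  set w := (InnerProductSpace.toDual ℝ ℂ).symm f
  have hf : ∀ z, f z = ⟪w, z⟫ := fun z => (InnerProductSpace.toDual_symm_apply ..).symm
  have hw : 0 < ‖w‖ := norm_pos_iff.2 (by simpa [w] using hf0)
  obtain ⟨j, hj⟩ := exists_nat_cos_pi_div_mul_norm_le_re hk ((y - p) * conj w)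
  have hyj : rot p (j * (2 * π / k)) y ∈ C := by
    rw [rot_nat_mul]; exact hsym.iterate j hy
  refine le_of_mul_le_mul_left ?_ hw
  calc ‖w‖ * (cos (π / k) * dist p y) = cos (π / k) * ‖(y - p) * conj w‖ := by
        rw [norm_mul, Complex.norm_conj, dist_comm, Complex.dist_eq]; ring
    _ ≤ (Complex.exp ((j * (2 * π / k) : ℝ) * Complex.I) * ((y - p) * conj w)).re := hj
    _ = f (rot p (j * (2 * π / k)) y) - f p := by
        rw [hf, hf, ← inner_sub_right, rot_sub_center, Complex.inner, mul_assoc]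
    _ ≤ f q - f p := sub_le_sub_right (hfq _ hyj) _
    _ = ⟪w, q - p⟫ := by rw [hf, hf, inner_sub_right]
    _ ≤ ‖w‖ * dist p q := by
        rw [dist_comm, Complex.dist_eq]; exact real_inner_le_norm _ _

lemma one_lt_sqrt_three_mul_cos_pi_div {k : ℕ} (hk : 4 ≤ k) : 1 < √3 * cos (π / k) := by
  have hcos : √2 / 2 ≤ cos (π / k) := by
    rw [← cos_pi_div_four]
    refine cos_le_cos_of_nonneg_of_le_pi (by positivity) (by linarith [pi_pos]) ?_
    gcongr
    exact_mod_cast hk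
  have h6 : 2 < √3 * √2 := by
    rw [← sqrt_mul (by norm_num), lt_sqrt (by norm_num)]; norm_num
  nlinarith [sqrt_nonneg 3]

lemma circumrad_le {C : Set ℂ} {p : ℂ} {c : ℝ} (hc : 0 ≤ c) (h : ∀ y ∈ C, dist p y ≤ c) :
    circumrad C p ≤ c :=
  Real.iSup_le (fun y => Real.iSup_le (h y) hc) hc

/-- For a `k`-rotationally symmetric planar convex body with `k ≥ 4`,
the circumradius and inradius (with respect to the center `p`)
satisfy `R < √3 · r`. -/
theorem stmt_8 (C : Set ℂ) (p : ℂ) (k : ℕ) (hC : IsConvexBody C)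
    (hk : 4 ≤ k) (hsym : IsRotSym C p k) (hp : p ∈ interior C) :
    circumrad C p < Real.sqrt 3 * infDist p (frontier C) := by
  obtain ⟨hcomp, hconv, -⟩ := hC
  have hfr : (frontier C).Nonempty := nonempty_frontier_iff.2
    ⟨⟨p, interior_subset hp⟩, fun h => noncompact_univ ℂ (h ▸ hcomp)⟩
  set r := infDist p (frontier C)
  have hr : 0 < r := (isClosed_frontier.notMem_iff_infDist_pos hfr).1 fun h => h.2 hp
  have hcos : 1 < √3 * cos (π / k) := one_lt_sqrt_three_mul_cos_pi_div hk
  have hbound : ∀ y ∈ C, cos (π / k) * dist p y ≤ r := fun y hy =>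
    (le_infDist hfr).2 fun q hq => cos_pi_div_mul_dist_le_of_notMem_interior (by omega) hconv
      ⟨p, hp⟩ (mapsTo_iff_image_subset.2 hsym.subset) hy hq.2
  have hcos_pos : 0 < cos (π / k) := pos_of_mul_pos_right (one_pos.trans hcos) (sqrt_nonneg 3)
  calc circumrad C p ≤ r / cos (π / k) := circumrad_le (by positivity) fun y hy =>
        (le_div_iff₀ hcos_pos).2 (by rw [mul_comm]; exact hbound y hy)
    _ < √3 * r := by
        rw [div_lt_iff₀ hcos_pos]; nlinarith
end
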